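/- Let G be a finite simple graph and let μ be a positive integer such that χ_DP(G ∨ K_μ) = χ(G) + μ, where χ denotes the ordinary chromatic number. Then for every integer p ≥ μ, χ_DP(G ∨ K_p) = χ(G) + p. -/

import Mathlib

open SimpleGraph

/-- `DPCover G H L` means `(L, H)` is a cover of the graph `G`:
(1) the sets `L u` partition `V(H)`; (2) each `H[L u]` is complete;
(3) for each edge `uv` of `G`, the edges of `H` between `L u` and `L v` form a matching;
(4) there are no edges of `H` between lists of distinct non-adjacent vertices. -/
structure DPCover {V : Type} (G : SimpleGraph V) {W : Type} (H : SimpleGraph W)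
    (L : V → Finset W) : Prop where
  partition : ∀ w : W, ∃! v : V, w ∈ L v
  cliques : ∀ v : V, ∀ a ∈ L v, ∀ b ∈ L v, a ≠ b → H.Adj a b
  matching : ∀ ⦃u v : V⦄, G.Adj u v → ∀ a ∈ L u, ∀ b ∈ L v, ∀ b' ∈ L v,
      H.Adj a b → H.Adj a b' → b = b'
  nonadj : ∀ ⦃u v : V⦄, u ≠ v → ¬ G.Adj u v → ∀ a ∈ L u, ∀ b ∈ L v, ¬ H.Adj a b

/-- A finset is independent in `H` if no two of its elements are adjacent. -/
def IsIndepFinset {W : Type} (H : SimpleGraph W) (S : Finset W) : Prop :=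
  ∀ a ∈ S, ∀ b ∈ S, ¬ H.Adj a b

/-- The independence number of `H`. -/
noncomputable def indepNum {W : Type} [Fintype W] (H : SimpleGraph W) : ℕ :=
  sSup {n : ℕ | ∃ S : Finset W, IsIndepFinset H S ∧ S.card = n}

/-- The DP-chromatic number of `G`: the least `m` such that every `m`-fold cover `(L, H)`
of `G` admits an `H`-coloring, i.e. an independent set in `H` of size `|V(G)|`. -/
noncomputable def chiDP {V : Type} [Fintype V] (G : SimpleGraph V) : ℕ :=
  sInf {m : ℕ | ∀ (W : Type) (_ : Fintype W) (H : SimpleGraph W) (L : V → Finset W),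
    DPCover G H L → (∀ v, (L v).card = m) →
    ∃ S : Finset W, IsIndepFinset H S ∧ S.card = Fintype.card V}

/-- The partial DP `t`-chromatic number of `G`: the minimum of the independence number
`α(H)` over all `t`-fold covers `(L, H)` of `G`. -/
noncomputable def alphaDP {V : Type} [Fintype V] (G : SimpleGraph V) (t : ℕ) : ℕ :=
  sInf {n : ℕ | ∃ (W : Type) (_ : Fintype W) (H : SimpleGraph W) (L : V → Finset W),
    DPCover G H L ∧ (∀ v, (L v).card = t) ∧ _root_.indepNum H = n}

/-- A graph `G` is partially DP-nice if `α_t^{DP}(G) ≥ t|V(G)|/χ_DP(G)` for all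
`t ∈ {1, …, χ_DP(G)}`. -/
def PartiallyDPNice {V : Type} [Fintype V] (G : SimpleGraph V) : Prop :=
  ∀ t : ℕ, 1 ≤ t → t ≤ chiDP G →
    (t * Fintype.card V : ℚ) / (chiDP G : ℚ) ≤ (alphaDP G t : ℚ)

/-- The join `G ∨ K_p` of `G` with the complete graph `K_p`: disjoint copies of `G` and
`K_p` together with all edges between them. -/
def joinComplete {V : Type} (G : SimpleGraph V) (p : ℕ) : SimpleGraph (V ⊕ Fin p) where
  Adj x y :=
    match x, y with
    | .inl a, .inl b => G.Adj a b
    | .inr a, .inr b => a ≠ b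
    | .inl _, .inr _ => True
    | .inr _, .inl _ => True
  symm := by
    constructor
    rintro (a | a) (b | b) h
    · exact G.adj_symm h
    · trivial
    · trivial
    · exact Ne.symm h
  loopless := by
    constructor
    rintro (a | a) h
    · exact G.loopless.irrefl a h
    · exact h rfl

/-- The chromatic number of a graph: the least `n` such that `G` is `n`-colorable. -/
noncomputable def chromNum {V : Type} (G : SimpleGraph V) : ℕ :=
  sInf {n : ℕ | G.Colorable n}

/-!
Proper `m`-colorings of `G` are the colorings of the cover `G □ K_m`, so `χ ≤ χ_DP`; and
`χ(G ∨ K_p) = χ(G) + p`. The upper bound follows by induction on `p` from the case `μ`, since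
adding a universal vertex `v₀` raises the DP-chromatic number by at most one: color `v₀` by any
`w₀ ∈ L v₀`; by the matching condition every other list contains at most one neighbour of `w₀`,
and deleting it leaves a cover of the old graph with one color fewer per list.
-/

def DPColorable {V : Type} [Fintype V] (G : SimpleGraph V) (m : ℕ) : Prop :=
  ∀ (W : Type) [Fintype W] (H : SimpleGraph W) (L : V → Finset W),
    DPCover G H L → (∀ v, (L v).card = m) →
    ∃ S : Finset W, IsIndepFinset H S ∧ S.card = Fintype.card V

section DPColorable

variable {V : Type} [Fintype V] {G : SimpleGraph V}

lemma DPColorable.chiDP_le {m : ℕ} (h : DPColorable G m) : chiDP G ≤ m :=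
  Nat.sInf_le h

lemma dpColorable_chiDP (h : ∃ m, DPColorable G m) : DPColorable G (chiDP G) :=
  Nat.sInf_mem h

lemma exists_dpColorable_of_chiDP_pos (h : 0 < chiDP G) : ∃ m, DPColorable G m :=
  Nat.nonempty_of_pos_sInf h

end DPColorable

section IndepFinset

variable {W : Type} {H : SimpleGraph W}

lemma IsIndepFinset.insert [DecidableEq W] {S : Finset W} {a : W} (hS : IsIndepFinset H S)
    (ha : ∀ b ∈ S, ¬H.Adj a b) : IsIndepFinset H (insert a S) := by
  intro x hx y hy hxy
  rw [Finset.mem_insert] at hx hy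
  rcases hx with rfl | hx <;> rcases hy with rfl | hy
  · exact H.loopless.irrefl _ hxy
  · exact ha y hy hxy
  · exact ha x hx hxy.symm
  · exact hS x hx y hy hxy

lemma IsIndepFinset.map {U : Type} {S : Finset U} (f : U ↪ W)
    (hS : IsIndepFinset (H.comap f) S) :
    IsIndepFinset H (S.map f) := by
  simp only [IsIndepFinset, Finset.forall_mem_map]
  exact hS

end IndepFinset

section Cover

variable {V W : Type} {G : SimpleGraph V} {H : SimpleGraph W} {L : V → Finset W}

lemma DPCover.card_filter_adj_le_one [DecidableRel H.Adj] (hc : DPCover G H L) {u v : V}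
    (huv : G.Adj u v) {a : W} (ha : a ∈ L u) : ((L v).filter (H.Adj a)).card ≤ 1 :=
  Finset.card_le_one.mpr fun _ hb _ hb' =>
    hc.matching huv a ha _ (Finset.mem_filter.mp hb).1 _ (Finset.mem_filter.mp hb').1
      (Finset.mem_filter.mp hb).2 (Finset.mem_filter.mp hb').2

/-- Each list is a clique, so an independent set of size `|V|` meets every list. -/
lemma DPCover.exists_mem_of_isIndepFinset [Fintype V] (hc : DPCover G H L) {S : Finset W}
    (hS : IsIndepFinset H S) (hcard : S.card = Fintype.card V) (v : V) : ∃ w ∈ S, w ∈ L v := by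
  have hf : ∀ w : S, ∃ u, (w : W) ∈ L u := fun w => (hc.partition w).exists
  choose f hf using hf
  have hinj : Function.Injective f := fun a b hab => by
    by_contra hne
    exact hS a a.2 b b.2
      (hc.cliques _ a (hf a) b (hab ▸ hf b) (Subtype.coe_injective.ne hne))
  have hbij : Function.Bijective f :=
    (Fintype.bijective_iff_injective_and_card f).mpr ⟨hinj, by simpa using hcard⟩
  obtain ⟨w, rfl⟩ := hbij.2 v
  exact ⟨w, w.2, hf w⟩

lemma DPCover.restrict {V' : Type} [Fintype V] [DecidableEq W] {G' : SimpleGraph V'}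
    {L : V' → Finset W} (hc : DPCover G' H L) (e : G ↪g G') (L' : V → Finset W)
    (hsub : ∀ u, L' u ⊆ L (e u)) :
    DPCover G (H.comap ((↑) : Finset.univ.biUnion L' → W))
      (fun u => (L' u).subtype (· ∈ Finset.univ.biUnion L')) := by
  have hmem : ∀ {u} {x : Finset.univ.biUnion L'}, x ∈ (L' u).subtype _ ↔ (x : W) ∈ L' u :=
    Finset.mem_subtype
  refine ⟨fun x => ?_, fun v a ha b hb hab => ?_, fun u v huv a ha b hb b' hb' h h' => ?_,
    fun u v huv hnadj a ha b hb => ?_⟩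
  · obtain ⟨u, -, hu⟩ := Finset.mem_biUnion.mp x.2
    exact ⟨u, hmem.mpr hu, fun v hv =>
      e.injective ((hc.partition x).unique (hsub v (hmem.mp hv)) (hsub u hu))⟩
  · exact hc.cliques _ a (hsub v (hmem.mp ha)) b (hsub v (hmem.mp hb))
      (Subtype.coe_injective.ne hab)
  · exact Subtype.ext (hc.matching (e.map_adj_iff.mpr huv) a (hsub u (hmem.mp ha))
      b (hsub v (hmem.mp hb)) b' (hsub v (hmem.mp hb')) h h')
  · exact hc.nonadj (e.injective.ne huv) (e.map_adj_iff.not.mpr hnadj)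
      a (hsub u (hmem.mp ha)) b (hsub v (hmem.mp hb))

end Cover

section Canonical

variable {V : Type} {G : SimpleGraph V}

/-- The cover whose `H`-colorings are exactly the proper `m`-colorings of `G`. -/
lemma dpCover_boxProd_top [DecidableEq V] (m : ℕ) :
    DPCover G (G □ (⊤ : SimpleGraph (Fin m))) (fun u => {u} ×ˢ Finset.univ) := by
  refine ⟨fun x => ⟨x.1, ?_, fun v hv => ?_⟩, ?_, ?_, ?_⟩ <;>
    simp only [Finset.mem_product, Finset.mem_singleton, Finset.mem_univ, and_true,
      boxProd_adj, top_adj] at *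
  · exact hv.symm
  · rintro v ⟨a₁, a₂⟩ rfl ⟨b₁, b₂⟩ rfl hab
    exact Or.inr ⟨fun h => hab (Prod.ext rfl h), rfl⟩
  · rintro u v huv ⟨a₁, a₂⟩ rfl ⟨b₁, b₂⟩ rfl ⟨b₁', b₂'⟩ rfl h h'
    rcases h with ⟨-, rfl⟩ | ⟨-, h⟩ <;> rcases h' with ⟨-, rfl⟩ | ⟨-, h'⟩
    · rfl
    all_goals exact absurd (by assumption) huv.ne
  · rintro u v huv hnadj ⟨a₁, a₂⟩ rfl ⟨b₁, b₂⟩ rfl (⟨h, -⟩ | ⟨-, h⟩)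
    exacts [hnadj h, huv h]

variable [Fintype V]

lemma DPColorable.colorable {m : ℕ} (h : DPColorable G m) : G.Colorable m := by
  classical
  have hc := dpCover_boxProd_top (G := G) m
  obtain ⟨S, hS, hcard⟩ := h _ _ _ hc (fun u => by simp)
  choose x hxS hxL using hc.exists_mem_of_isIndepFinset hS hcard
  have hx : ∀ u, x u = (u, (x u).2) := fun u =>
    Prod.ext (Finset.mem_singleton.mp (Finset.mem_product.mp (hxL u)).1) rfl
  refine ⟨Coloring.mk (fun u => (x u).2) fun {u v} huv hcol => hS _ (hxS u) _ (hxS v) ?_⟩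
  rw [hx u, hx v, boxProd_adj]
  exact Or.inl ⟨huv, hcol⟩

end Canonical

lemma DPColorable.of_universal {V V' : Type} [Fintype V] [Fintype V'] {G : SimpleGraph V}
    {G' : SimpleGraph V'} {m : ℕ} (h : DPColorable G m) (e : G ↪g G') (v₀ : V')
    (huniv : ∀ u, G'.Adj v₀ (e u)) (hcard : Fintype.card V' = Fintype.card V + 1) :
    DPColorable G' (m + 1) := by
  intro W _ H L hc hL
  classical
  obtain ⟨w₀, hw₀⟩ : (L v₀).Nonempty := by rw [← Finset.card_pos, hL]; omega
  have hlarge : ∀ u, m ≤ ((L (e u)).filter (¬H.Adj w₀ ·)).card := fun u => by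
    have := hc.card_filter_adj_le_one (huniv u) hw₀
    have := Finset.card_filter_add_card_filter_not (s := L (e u)) (H.Adj w₀)
    rw [hL] at this
    omega
  choose L' hL'sub hL'card using fun u => Finset.exists_subset_card_eq (hlarge u)
  have hsub : ∀ u, L' u ⊆ L (e u) := fun u => (hL'sub u).trans (Finset.filter_subset _ _)
  obtain ⟨S, hS, hScard⟩ := h _ _ _ (hc.restrict e L' hsub) fun u => by
    rw [Finset.card_subtype, Finset.filter_true_of_mem (s := L' u) fun x hx =>
      Finset.mem_biUnion.mpr ⟨u, Finset.mem_univ u, hx⟩, hL'card]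
  have hfresh : ∀ x ∈ S.map (Function.Embedding.subtype _), x ≠ w₀ ∧ ¬H.Adj w₀ x := by
    simp only [Finset.forall_mem_map, Function.Embedding.subtype_apply]
    intro x _
    obtain ⟨u, -, hu⟩ := Finset.mem_biUnion.mp x.2
    refine ⟨fun hxw => ?_, (Finset.mem_filter.mp (hL'sub u hu)).2⟩
    have : e u = v₀ := (hc.partition x).unique (hsub u hu) (hxw ▸ hw₀)
    exact G'.loopless.irrefl _ (this ▸ huniv u)
  refine ⟨insert w₀ (S.map (Function.Embedding.subtype _)), (hS.map _).insert
    fun x hx => (hfresh x hx).2, ?_⟩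
  rw [Finset.card_insert_of_notMem fun h => (hfresh w₀ h).1 rfl, Finset.card_map, hScard, hcard]

section Join

variable {V : Type} (G : SimpleGraph V)

def joinCompleteCastSucc (p : ℕ) : joinComplete G p ↪g joinComplete G (p + 1) where
  toFun := Sum.map id Fin.castSucc
  inj' := Sum.map_injective.mpr ⟨Function.injective_id, Fin.castSucc_injective p⟩
  map_rel_iff' := by
    rintro (a | a) (b | b) <;> simp [joinComplete]

lemma DPColorable.joinComplete_succ [Fintype V] {p m : ℕ}
    (h : DPColorable (joinComplete G p) m) : DPColorable (joinComplete G (p + 1)) (m + 1) := by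
  refine h.of_universal (joinCompleteCastSucc G p) (.inr (Fin.last p)) ?_ (by simp; omega)
  rintro (a | a)
  · trivial
  · exact (Fin.castSucc_lt_last a).ne'

lemma chromNum_add_le_of_colorable_joinComplete {p m : ℕ}
    (h : (joinComplete G p).Colorable m) : chromNum G + p ≤ m := by
  classical
  obtain ⟨C⟩ := h
  have hinr : Function.Injective (C ∘ Sum.inr) := fun i j hij => by
    by_contra hne
    exact C.valid (show (joinComplete G p).Adj (.inr i) (.inr j) from hne) hij
  let T : Finset (Fin m) := Finset.univ.map ⟨_, hinr⟩
  have hT : T.card = p := by simp [T]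
  have hinl : ∀ v, C (.inl v) ∈ Tᶜ := fun v => by
    simp only [T, Finset.mem_compl, Finset.mem_map, Finset.mem_univ, true_and,
      Function.Embedding.coeFn_mk, Function.comp_apply, not_exists]
    exact fun i hi => C.valid (show (joinComplete G p).Adj (.inl v) (.inr i) from trivial) hi.symm
  have hcol : G.Colorable (m - p) := by
    have := (Coloring.mk (fun v => (⟨C (.inl v), hinl v⟩ : (Tᶜ : Finset (Fin m))))
      fun huv hc => C.valid (show (joinComplete G _).Adj (.inl _) (.inl _) from huv)
        (congrArg Subtype.val hc)).colorable
    simpa [Finset.card_compl, hT] using this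
  have hpm : p ≤ m := hT ▸ T.card_le_univ.trans (by simp)
  have : chromNum G ≤ m - p := Nat.sInf_le hcol
  omega

end Join

/-- If `χ_DP(G ∨ K_μ) = χ(G) + μ` for some positive integer `μ`, then
`χ_DP(G ∨ K_p) = χ(G) + p` for every `p ≥ μ`. -/
theorem chiDP_joinComplete_eventually {V : Type} [Fintype V] (G : SimpleGraph V)
    (μ : ℕ) (hμ : 0 < μ) (hbase : chiDP (joinComplete G μ) = chromNum G + μ) :
    ∀ p : ℕ, μ ≤ p → chiDP (joinComplete G p) = chromNum G + p := by
  -- `chiDP` is `0` when no list size works; here it is `χ(G) + μ > 0`.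
  have hbaseDP : DPColorable (joinComplete G μ) (chromNum G + μ) :=
    hbase ▸ dpColorable_chiDP (exists_dpColorable_of_chiDP_pos (by omega))
  intro p hp
  have hDP : DPColorable (joinComplete G p) (chromNum G + p) := by
    induction p, hp using Nat.le_induction with
    | base => exact hbaseDP
    | succ p _ ih => exact ih.joinComplete_succ G
  exact le_antisymm hDP.chiDP_le
    (chromNum_add_le_of_colorable_joinComplete G (dpColorable_chiDP ⟨_, hDP⟩).colorable)
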